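/- There exist absolute constants c, C > 0 with the following property. Let ℐ be a finite collection of dyadic intervals in ℝ and let (a_I)_{I∈ℐ} be complex numbers. Define A := sup_J ((1/|J|) Σ_{I∈ℐ, I⊆J} |a_I|²)^{1/2} and B := sup_J (1/|J|) ‖(Σ_{I∈ℐ, I⊆J} |a_I|² 1_I / |I|)^{1/2}‖_{L^{1,∞}(ℝ)}, where both suprema are taken over all bounded intervals J ⊂ ℝ with |J| > 0. Then c·B ≤ A ≤ C·B. -/

import Mathlib

open MeasureTheory
open scoped ENNReal NNReal

/-- The dyadic interval `[2^j m, 2^j (m+1))` encoded by `p = (j, m)`. -/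
def dyadicI (p : ℤ × ℤ) : Set ℝ :=
  Set.Ico ((2 : ℝ) ^ p.1 * p.2) ((2 : ℝ) ^ p.1 * (p.2 + 1))

/-- The weak-`L¹` quasinorm `sup_{λ>0} λ |{ |g| > λ }|`, valued in `ℝ≥0∞`. -/
noncomputable def weakL1 (g : ℝ → ℝ) : ℝ≥0∞ :=
  ⨆ (l : ℝ) (_ : 0 < l), ENNReal.ofReal l * volume {x : ℝ | l < |g x|}

/-- The `L²`-type maximal size of a finite family of coefficients over dyadic
intervals: `A = sup_J ((1/|J|) Σ_{I ⊆ J} |a_I|²)^{1/2}`. -/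
noncomputable def sizeA (ℐ : Finset (ℤ × ℤ)) (a : ℤ × ℤ → ℂ) : ℝ≥0∞ :=
  ⨆ (u : ℝ) (v : ℝ) (_ : u < v),
    ((ENNReal.ofReal (v - u))⁻¹ *
      ∑ p ∈ ℐ, Set.indicator {q : ℤ × ℤ | dyadicI q ⊆ Set.Icc u v}
        (fun q => ENNReal.ofReal (‖a q‖ ^ 2)) p) ^ (1 / 2 : ℝ)

/-- The weak-`L¹` maximal size:
`B = sup_J (1/|J|) ‖(Σ_{I ⊆ J} |a_I|² 1_I/|I|)^{1/2}‖_{L^{1,∞}}`. -/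
noncomputable def sizeB (ℐ : Finset (ℤ × ℤ)) (a : ℤ × ℤ → ℂ) : ℝ≥0∞ :=
  ⨆ (u : ℝ) (v : ℝ) (_ : u < v),
    (ENNReal.ofReal (v - u))⁻¹ *
      weakL1 (fun x => Real.sqrt (∑ p ∈ ℐ,
        Set.indicator {q : ℤ × ℤ | dyadicI q ⊆ Set.Icc u v}
          (fun q => ‖a q‖ ^ 2 * Set.indicator (dyadicI q) (fun _ => (1 : ℝ)) x /
            (2 : ℝ) ^ q.1) p))

/-!
For a window `J` write `S_J = Σ_{I ⊆ J} |a_I|²` and `F_J = Σ_{I ⊆ J} |a_I|² 1_I / |I|`, so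
that `∫ F_J = S_J`, `F_J` vanishes off `J`, `A² = sup_J S_J / |J|` and
`B = sup_J ‖√F_J‖_{L^{1,∞}} / |J|`.

`B ≤ A`: by Chebyshev `λ² |{F_J > λ²}| ≤ S_J ≤ A² |J|`, and `|{F_J > λ²}| ≤ |J|`.

`A ≤ 12 B`: dyadic intervals are nested or disjoint, so `A²` is a Carleson packing constant for the
family and `∫ F_J² ≤ 2 A² S_J`. At height `L = S_J / (2|J|)` the level set `E = {F_J > L}` carries
half of `∫ F_J`, hence `S_J ≤ 8 A² |E|` by Cauchy–Schwarz, while `√L |E| ≤ |J| B`. Together these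
give `(S_J / |J|)³ ≤ 128 A⁴ B²`, and the supremum over `J` yields `A² ≤ 128 B²`.
-/

open Set
open scoped Classical

lemma mem_dyadicI_iff (p : ℤ × ℤ) (x : ℝ) : x ∈ dyadicI p ↔ ⌊x / (2 : ℝ) ^ p.1⌋ = p.2 := by
  have h := zpow_pos (two_pos : (0 : ℝ) < 2) p.1
  rw [Int.floor_eq_iff, le_div_iff₀ h, div_lt_iff₀ h, dyadicI, mem_Ico, mul_comm _ (p.2 : ℝ),
    mul_comm _ ((p.2 : ℝ) + 1)]

lemma dyadicI_subset_of_le {p q : ℤ × ℤ} (hpq : p.1 ≤ q.1)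
    (h : (dyadicI p ∩ dyadicI q).Nonempty) : dyadicI p ⊆ dyadicI q := by
  obtain ⟨k, hk⟩ := Int.eq_ofNat_of_zero_le (sub_nonneg.2 hpq)
  have hscale : ∀ y : ℝ, ⌊y / (2 : ℝ) ^ q.1⌋ = ⌊y / (2 : ℝ) ^ p.1⌋ / (2 ^ k : ℕ) := by
    intro y
    rw [← Int.floor_div_natCast, div_div, show q.1 = p.1 + k by omega, zpow_add₀ two_ne_zero]
    push_cast
    rfl
  obtain ⟨x, hxp, hxq⟩ := h
  intro y hy
  rw [mem_dyadicI_iff] at hxp hxq hy ⊢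
  rw [hscale] at hxq ⊢
  rwa [hy, ← hxp]

lemma dyadicI_subset_or_subset_or_disjoint (p q : ℤ × ℤ) :
    dyadicI p ⊆ dyadicI q ∨ dyadicI q ⊆ dyadicI p ∨ Disjoint (dyadicI p) (dyadicI q) := by
  rcases (dyadicI p ∩ dyadicI q).eq_empty_or_nonempty with h | h
  · exact Or.inr (Or.inr (disjoint_iff_inter_eq_empty.2 h))
  rcases le_total p.1 q.1 with hpq | hqp
  · exact Or.inl (dyadicI_subset_of_le hpq h)
  · exact Or.inr (Or.inl (dyadicI_subset_of_le hqp (inter_comm _ _ ▸ h)))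

lemma measurableSet_dyadicI (p : ℤ × ℤ) : MeasurableSet (dyadicI p) := measurableSet_Ico

lemma volume_dyadicI (p : ℤ × ℤ) : volume (dyadicI p) = ENNReal.ofReal ((2 : ℝ) ^ p.1) := by
  rw [dyadicI, Real.volume_Ico]
  ring_nf

lemma ofReal_div_zpow_mul_volume_dyadicI {r : ℝ} (hr : 0 ≤ r) (p : ℤ × ℤ) :
    ENNReal.ofReal (r / (2 : ℝ) ^ p.1) * volume (dyadicI p) = ENNReal.ofReal r := by
  rw [volume_dyadicI, ← ENNReal.ofReal_mul (by positivity),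
    div_mul_cancel₀ _ (zpow_pos two_pos p.1).ne']

lemma zpow_le_of_dyadicI_subset_Icc {p : ℤ × ℤ} {u v : ℝ} (h : dyadicI p ⊆ Icc u v) :
    (2 : ℝ) ^ p.1 ≤ v - u := by
  have := measure_mono (μ := volume) h
  rw [volume_dyadicI, Real.volume_Icc, ENNReal.ofReal_le_ofReal_iff'] at this
  exact this.resolve_right (zpow_pos two_pos p.1).not_ge

section PackingAndLevelSets

variable {α ι : Type*} [MeasurableSpace α] {μ : Measure α}

lemma measure_inter_le_of_subset_or_subset_or_disjoint {E F : Set α}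
    (h : E ⊆ F ∨ F ⊆ E ∨ Disjoint E F) :
    μ (E ∩ F) ≤ (if F ⊆ E then μ F else 0) + (if E ⊆ F then μ E else 0) := by
  rcases h with h | h | h
  · rw [inter_eq_left.2 h, if_pos h]
    exact le_add_self
  · rw [inter_eq_right.2 h, if_pos h]
    exact le_self_add
  · simp [h.inter_eq]

lemma lintegral_sq_sum_indicator_le {s : Finset ι} {E : ι → Set α}
    (hE : ∀ i, MeasurableSet (E i))
    (hnest : ∀ i ∈ s, ∀ j ∈ s, E i ⊆ E j ∨ E j ⊆ E i ∨ Disjoint (E i) (E j))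
    (c : ι → ℝ≥0∞) {K : ℝ≥0∞}
    (hpack : ∀ i ∈ s, ∑ j ∈ s with E j ⊆ E i, c j * μ (E j) ≤ K * μ (E i)) :
    ∫⁻ x, (∑ i ∈ s, (E i).indicator (fun _ => c i) x) ^ 2 ∂μ
      ≤ 2 * K * ∑ i ∈ s, c i * μ (E i) := by
  set g : ι → ι → ℝ≥0∞ := fun i j => if E j ⊆ E i then c i * (c j * μ (E j)) else 0
  have hsq : ∀ x, (∑ i ∈ s, (E i).indicator (fun _ => c i) x) ^ 2
      = ∑ i ∈ s, ∑ j ∈ s, (E i ∩ E j).indicator (fun _ => c i * c j) x := by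
    intro x
    simp only [sq, Finset.sum_mul_sum, inter_indicator_mul]
  have hg : ∀ i ∈ s, ∑ j ∈ s, g i j ≤ c i * (K * μ (E i)) := by
    intro i hi
    rw [← Finset.sum_filter, ← Finset.mul_sum]
    gcongr
    exact hpack i hi
  calc ∫⁻ x, (∑ i ∈ s, (E i).indicator (fun _ => c i) x) ^ 2 ∂μ
      = ∑ i ∈ s, ∑ j ∈ s, c i * c j * μ (E i ∩ E j) := by
        simp_rw [hsq]
        rw [lintegral_finsetSum _ fun i _ => Finset.measurable_sum _ fun j _ =>
          measurable_const.indicator ((hE i).inter (hE j))]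
        refine Finset.sum_congr rfl fun i _ => ?_
        rw [lintegral_finsetSum _ fun j _ => measurable_const.indicator ((hE i).inter (hE j))]
        simp_rw [lintegral_indicator_const ((hE i).inter (hE _))]
    _ ≤ ∑ i ∈ s, ∑ j ∈ s, (g i j + g j i) := by
        refine Finset.sum_le_sum fun i hi => Finset.sum_le_sum fun j hj => ?_
        calc c i * c j * μ (E i ∩ E j)
            ≤ c i * c j * ((if E j ⊆ E i then μ (E j) else 0)
                + (if E i ⊆ E j then μ (E i) else 0)) := by
              gcongr
              exact measure_inter_le_of_subset_or_subset_or_disjoint (hnest i hi j hj)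
          _ = g i j + g j i := by
              simp only [g]
              split_ifs <;> ring
    _ = 2 * ∑ i ∈ s, ∑ j ∈ s, g i j := by
        rw [Finset.sum_congr rfl fun i _ => Finset.sum_add_distrib, Finset.sum_add_distrib,
          Finset.sum_comm (f := fun i j => g j i), two_mul]
    _ ≤ 2 * K * ∑ i ∈ s, c i * μ (E i) := by
        rw [mul_assoc]
        gcongr 2 * ?_
        rw [Finset.mul_sum]
        exact Finset.sum_le_sum fun i hi => (hg i hi).trans_eq (by ring)

lemma lintegral_le_mul_measure_add_setLIntegral_lt {f : α → ℝ≥0∞} (hf : Measurable f)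
    {T : Set α} (hT : Function.support f ⊆ T) (L : ℝ≥0∞) :
    ∫⁻ x, f x ∂μ ≤ L * μ T + ∫⁻ x in {x | L < f x}, f x ∂μ := by
  have hlev : MeasurableSet {x | L < f x} := measurableSet_lt measurable_const hf
  have hpt : ∀ x, f x ≤ T.indicator (fun _ => L) x + {x | L < f x}.indicator f x := by
    intro x
    by_cases hL : L < f x
    · rw [indicator_of_mem (show x ∈ {x | L < f x} from hL)]
      exact le_add_self
    by_cases hx : x ∈ T
    · rw [indicator_of_mem hx]
      exact le_add_right (not_lt.1 hL)
    · simp [Function.notMem_support.1 fun h => hx (hT h)]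
  calc ∫⁻ x, f x ∂μ ≤ ∫⁻ x, T.indicator (fun _ => L) x + {x | L < f x}.indicator f x ∂μ :=
        lintegral_mono hpt
    _ = ∫⁻ x, T.indicator (fun _ => L) x ∂μ + ∫⁻ x in {x | L < f x}, f x ∂μ := by
        rw [lintegral_add_right _ (hf.indicator hlev), lintegral_indicator hlev]
    _ ≤ L * μ T + ∫⁻ x in {x | L < f x}, f x ∂μ := by
        gcongr
        exact lintegral_indicator_const_le T L

lemma sq_setLIntegral_le {f : α → ℝ≥0∞} (hf : AEMeasurable f μ) (s : Set α) :
    (∫⁻ x in s, f x ∂μ) ^ 2 ≤ (∫⁻ x, f x ^ 2 ∂μ) * μ s := by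
  have hCS := ENNReal.lintegral_mul_le_Lp_mul_Lq (μ.restrict s) Real.HolderConjugate.two_two
    hf.restrict (aemeasurable_const (b := (1 : ℝ≥0∞)))
  simp only [Pi.mul_apply, mul_one, one_pow, setLIntegral_one, ENNReal.rpow_two] at hCS
  calc (∫⁻ x in s, f x ∂μ) ^ 2
      ≤ ((∫⁻ x in s, f x ^ 2 ∂μ) ^ (1 / 2 : ℝ) * μ s ^ (1 / 2 : ℝ)) ^ 2 :=
        ENNReal.pow_le_pow_left hCS
    _ = (∫⁻ x in s, f x ^ 2 ∂μ) * μ s := by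
        rw [mul_pow, ← ENNReal.rpow_natCast, ← ENNReal.rpow_natCast (μ s ^ _),
          ← ENNReal.rpow_mul, ← ENNReal.rpow_mul]
        norm_num
    _ ≤ (∫⁻ x, f x ^ 2 ∂μ) * μ s := by
        gcongr
        exact Measure.restrict_le_self

end PackingAndLevelSets

section Window

variable (ℐ : Finset (ℤ × ℤ)) (a : ℤ × ℤ → ℂ) (u v : ℝ)

noncomputable def windowFamily : Finset (ℤ × ℤ) := {q ∈ ℐ | dyadicI q ⊆ Icc u v}

noncomputable def windowMass : ℝ≥0∞ := ∑ p ∈ windowFamily ℐ u v, ENNReal.ofReal (‖a p‖ ^ 2)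

noncomputable def windowDensity (x : ℝ) : ℝ≥0∞ :=
  ∑ p ∈ windowFamily ℐ u v,
    (dyadicI p).indicator (fun _ => ENNReal.ofReal (‖a p‖ ^ 2 / (2 : ℝ) ^ p.1)) x

lemma sum_indicator_eq_sum_windowFamily {M : Type*} [AddCommMonoid M] (f : ℤ × ℤ → M) :
    ∑ p ∈ ℐ, {q : ℤ × ℤ | dyadicI q ⊆ Icc u v}.indicator f p
      = ∑ p ∈ windowFamily ℐ u v, f p := by
  rw [windowFamily, Finset.sum_filter]
  rfl

lemma ofReal_sizeB_integrand (x : ℝ) :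
    ENNReal.ofReal (∑ p ∈ ℐ, {q : ℤ × ℤ | dyadicI q ⊆ Icc u v}.indicator
      (fun q => ‖a q‖ ^ 2 * (dyadicI q).indicator (fun _ => (1 : ℝ)) x / (2 : ℝ) ^ q.1) p)
      = windowDensity ℐ a u v x := by
  rw [sum_indicator_eq_sum_windowFamily, windowDensity,
    ENNReal.ofReal_sum_of_nonneg fun p _ => div_nonneg
      (mul_nonneg (sq_nonneg _) (indicator_nonneg (fun _ _ => zero_le_one) _)) (by positivity)]
  refine Finset.sum_congr rfl fun p _ => ?_
  by_cases hx : x ∈ dyadicI p <;> simp [hx]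

lemma measurable_windowDensity : Measurable (windowDensity ℐ a u v) :=
  Finset.measurable_sum _ fun _ _ => measurable_const.indicator (measurableSet_dyadicI _)

lemma support_windowDensity_subset : Function.support (windowDensity ℐ a u v) ⊆ Icc u v := by
  intro x hx
  obtain ⟨p, hp, hpx⟩ := Finset.exists_ne_zero_of_sum_ne_zero hx
  exact (Finset.mem_filter.1 hp).2 (Set.support_indicator_subset hpx)

lemma lintegral_windowDensity : ∫⁻ x, windowDensity ℐ a u v x = windowMass ℐ a u v := by
  unfold windowDensity
  rw [lintegral_finsetSum _ fun _ _ => measurable_const.indicator (measurableSet_dyadicI _)]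
  refine Finset.sum_congr rfl fun p _ => ?_
  rw [lintegral_indicator_const (measurableSet_dyadicI p),
    ofReal_div_zpow_mul_volume_dyadicI (sq_nonneg _)]

lemma windowMass_ne_top : windowMass ℐ a u v ≠ ⊤ :=
  ENNReal.sum_ne_top.2 fun _ _ => ENNReal.ofReal_ne_top

end Window

section SizeA

variable (ℐ : Finset (ℤ × ℤ)) (a : ℤ × ℤ → ℂ)

lemma sizeA_sq : sizeA ℐ a ^ 2
    = ⨆ (u : ℝ) (v : ℝ) (_ : u < v), (ENNReal.ofReal (v - u))⁻¹ * windowMass ℐ a u v := by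
  simp only [sizeA, ENNReal.iSup_pow_of_ne_zero two_ne_zero, sum_indicator_eq_sum_windowFamily,
    windowMass, ← ENNReal.rpow_natCast, ← ENNReal.rpow_mul]
  norm_num

variable {ℐ a} in
lemma inv_mul_windowMass_le_sizeA_sq {u v : ℝ} (huv : u < v) :
    (ENNReal.ofReal (v - u))⁻¹ * windowMass ℐ a u v ≤ sizeA ℐ a ^ 2 := by
  rw [sizeA_sq]
  exact le_iSup₂_of_le u v (le_iSup_of_le huv le_rfl)

variable {ℐ a} in
lemma windowMass_le_sizeA_sq_mul {u v : ℝ} (huv : u < v) :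
    windowMass ℐ a u v ≤ sizeA ℐ a ^ 2 * ENNReal.ofReal (v - u) := by
  rw [mul_comm, ← ENNReal.inv_mul_le_iff (by simpa using huv) ENNReal.ofReal_ne_top]
  exact inv_mul_windowMass_le_sizeA_sq huv

lemma sizeA_ne_top : sizeA ℐ a ≠ ⊤ := by
  suffices sizeA ℐ a ^ 2 ≠ ⊤ by simpa using this
  refine ne_top_of_le_ne_top (b := ∑ p ∈ ℐ, ENNReal.ofReal (‖a p‖ ^ 2 / (2 : ℝ) ^ p.1))
    (ENNReal.sum_ne_top.2 fun _ _ => ENNReal.ofReal_ne_top) ?_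
  rw [sizeA_sq]
  refine iSup₂_le fun u v => iSup_le fun huv => ?_
  rw [windowMass, Finset.mul_sum]
  refine (Finset.sum_le_sum fun p hp => ?_).trans
    (Finset.sum_le_sum_of_subset (Finset.filter_subset _ ℐ))
  rw [ENNReal.ofReal_div_of_pos (zpow_pos two_pos p.1), div_eq_mul_inv, mul_comm]
  gcongr
  exact zpow_le_of_dyadicI_subset_Icc (Finset.mem_filter.1 hp).2

lemma sum_subset_dyadicI_le (u v : ℝ) (p : ℤ × ℤ) :
    ∑ q ∈ windowFamily ℐ u v with dyadicI q ⊆ dyadicI p, ENNReal.ofReal (‖a q‖ ^ 2)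
      ≤ sizeA ℐ a ^ 2 * volume (dyadicI p) := by
  have hlen := zpow_pos (two_pos : (0 : ℝ) < 2) p.1
  calc ∑ q ∈ windowFamily ℐ u v with dyadicI q ⊆ dyadicI p, ENNReal.ofReal (‖a q‖ ^ 2)
      ≤ windowMass ℐ a ((2 : ℝ) ^ p.1 * p.2) ((2 : ℝ) ^ p.1 * (p.2 + 1)) := by
        refine Finset.sum_le_sum_of_subset fun q hq => ?_
        simp only [windowFamily, Finset.mem_filter] at hq ⊢
        exact ⟨hq.1.1, hq.2.trans Ico_subset_Icc_self⟩
    _ ≤ sizeA ℐ a ^ 2 * ENNReal.ofReal ((2 : ℝ) ^ p.1 * (p.2 + 1) - (2 : ℝ) ^ p.1 * p.2) :=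
        windowMass_le_sizeA_sq_mul (by nlinarith)
    _ = sizeA ℐ a ^ 2 * volume (dyadicI p) := by
        rw [volume_dyadicI]
        ring_nf

lemma lintegral_windowDensity_sq_le (u v : ℝ) :
    ∫⁻ x, windowDensity ℐ a u v x ^ 2 ≤ 2 * sizeA ℐ a ^ 2 * windowMass ℐ a u v := by
  have hmass : windowMass ℐ a u v = ∑ p ∈ windowFamily ℐ u v,
      ENNReal.ofReal (‖a p‖ ^ 2 / (2 : ℝ) ^ p.1) * volume (dyadicI p) := by
    simp only [ofReal_div_zpow_mul_volume_dyadicI (sq_nonneg _), windowMass]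
  rw [hmass]
  refine lintegral_sq_sum_indicator_le measurableSet_dyadicI
    (fun p _ q _ => dyadicI_subset_or_subset_or_disjoint p q) _ fun p _ => ?_
  simpa only [ofReal_div_zpow_mul_volume_dyadicI (sq_nonneg _)] using
    sum_subset_dyadicI_le ℐ a u v p

end SizeA

section SizeB

variable (ℐ : Finset (ℤ × ℤ)) (a : ℤ × ℤ → ℂ)

lemma sizeB_eq : sizeB ℐ a = ⨆ (u : ℝ) (v : ℝ) (_ : u < v), (ENNReal.ofReal (v - u))⁻¹ *
    ⨆ (l : ℝ) (_ : 0 < l), ENNReal.ofReal l *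
      volume {x | ENNReal.ofReal (l ^ 2) < windowDensity ℐ a u v x} := by
  refine iSup_congr fun u => iSup_congr fun v => iSup_congr fun _ => ?_
  rw [weakL1]
  refine congrArg _ (iSup_congr fun l => iSup_congr fun hl => ?_)
  congr 2
  ext x
  rw [mem_ofPred_eq, mem_ofPred_eq, ← ofReal_sizeB_integrand, abs_of_nonneg (Real.sqrt_nonneg _),
    Real.lt_sqrt hl.le, ENNReal.ofReal_lt_ofReal_iff_of_nonneg (sq_nonneg l)]

variable {ℐ a} in
lemma mul_volume_lt_windowDensity_le {u v l : ℝ} (huv : u < v) (hl : 0 < l) :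
    ENNReal.ofReal l * volume {x | ENNReal.ofReal (l ^ 2) < windowDensity ℐ a u v x}
      ≤ ENNReal.ofReal (v - u) * sizeB ℐ a := by
  rw [← ENNReal.inv_mul_le_iff (by simpa using huv) ENNReal.ofReal_ne_top, sizeB_eq]
  refine le_iSup₂_of_le u v (le_iSup_of_le huv ?_)
  gcongr
  exact le_iSup₂_of_le l hl le_rfl

lemma sizeB_le_sizeA : sizeB ℐ a ≤ sizeA ℐ a := by
  rw [sizeB_eq]
  refine iSup₂_le fun u v => iSup_le fun huv => ?_
  simp only [ENNReal.mul_iSup]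
  refine iSup₂_le fun l hl => ?_
  set m := ENNReal.ofReal (v - u)
  set E := {x | ENNReal.ofReal (l ^ 2) < windowDensity ℐ a u v x}
  have hm0 : m ≠ 0 := by simpa [m] using huv
  have hmtop : m ≠ ⊤ := ENNReal.ofReal_ne_top
  have hcheb : ENNReal.ofReal (l ^ 2) * volume E ≤ windowMass ℐ a u v :=
    calc ENNReal.ofReal (l ^ 2) * volume E
        ≤ ENNReal.ofReal (l ^ 2) * volume {x | ENNReal.ofReal (l ^ 2) ≤ windowDensity ℐ a u v x} :=
          by gcongr; exact fun _ hx => le_of_lt (α := ℝ≥0∞) hx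
      _ ≤ ∫⁻ x, windowDensity ℐ a u v x :=
          mul_meas_ge_le_lintegral₀ (measurable_windowDensity ℐ a u v).aemeasurable _
      _ = windowMass ℐ a u v := lintegral_windowDensity ℐ a u v
  have hEm : volume E ≤ m := by
    rw [show m = volume (Icc u v) from Real.volume_Icc.symm]
    refine measure_mono fun x hx => support_windowDensity_subset ℐ a u v ?_
    exact (lt_of_le_of_lt zero_le hx).ne'
  rw [← ENNReal.pow_le_pow_left_iff two_ne_zero]
  calc (m⁻¹ * (ENNReal.ofReal l * volume E)) ^ 2
      = (m⁻¹ * (ENNReal.ofReal (l ^ 2) * volume E)) * (m⁻¹ * volume E) := by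
        rw [ENNReal.ofReal_pow hl.le]
        ring
    _ ≤ (m⁻¹ * windowMass ℐ a u v) * (m⁻¹ * m) := by gcongr
    _ ≤ sizeA ℐ a ^ 2 := by
        rw [ENNReal.inv_mul_cancel hm0 hmtop, mul_one]
        exact inv_mul_windowMass_le_sizeA_sq huv

end SizeB

section Converse

variable {ℐ : Finset (ℤ × ℤ)} {a : ℤ × ℤ → ℂ} {u v : ℝ} {L : ℝ≥0∞}

lemma windowMass_le_two_mul_setLIntegral
    (hL : 2 * (L * ENNReal.ofReal (v - u)) ≤ windowMass ℐ a u v) :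
    windowMass ℐ a u v
      ≤ 2 * ∫⁻ x in {x | L < windowDensity ℐ a u v x}, windowDensity ℐ a u v x := by
  have hlevel := lintegral_le_mul_measure_add_setLIntegral_lt (μ := volume)
    (measurable_windowDensity ℐ a u v) (support_windowDensity_subset ℐ a u v) L
  rw [lintegral_windowDensity, Real.volume_Icc] at hlevel
  rw [← ENNReal.add_le_add_iff_left (windowMass_ne_top ℐ a u v)]
  calc windowMass ℐ a u v + windowMass ℐ a u v
      ≤ 2 * (L * ENNReal.ofReal (v - u)) + 2 * ∫⁻ x in {x | L < windowDensity ℐ a u v x},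
          windowDensity ℐ a u v x := by
        rw [← two_mul, ← mul_add]
        gcongr
    _ ≤ _ := by gcongr

lemma windowMass_le_mul_volume (hL : 2 * (L * ENNReal.ofReal (v - u)) ≤ windowMass ℐ a u v) :
    windowMass ℐ a u v ≤ 8 * sizeA ℐ a ^ 2 * volume {x | L < windowDensity ℐ a u v x} := by
  set S := windowMass ℐ a u v
  set F := windowDensity ℐ a u v
  set E := {x | L < F x}
  rcases eq_or_ne S 0 with hS0 | hS0
  · simp [hS0]
  have hCS : S * S ≤ S * (8 * sizeA ℐ a ^ 2 * volume E) :=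
    calc S * S ≤ (2 * ∫⁻ x in E, F x) ^ 2 := by
          rw [← sq]
          gcongr
          exact windowMass_le_two_mul_setLIntegral hL
      _ = 4 * (∫⁻ x in E, F x) ^ 2 := by ring
      _ ≤ 4 * ((∫⁻ x, F x ^ 2) * volume E) := by
          gcongr
          exact sq_setLIntegral_le (measurable_windowDensity ℐ a u v).aemeasurable E
      _ ≤ 4 * (2 * sizeA ℐ a ^ 2 * S * volume E) := by
          gcongr
          exact lintegral_windowDensity_sq_le ℐ a u v
      _ = S * (8 * sizeA ℐ a ^ 2 * volume E) := by ring
  exact (ENNReal.mul_le_mul_iff_right hS0 (windowMass_ne_top ℐ a u v)).1 hCS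

lemma inv_mul_windowMass_pow_three_le (huv : u < v) :
    ((ENNReal.ofReal (v - u))⁻¹ * windowMass ℐ a u v) ^ 3
      ≤ 128 * sizeA ℐ a ^ 4 * sizeB ℐ a ^ 2 := by
  set S := windowMass ℐ a u v
  have hStop : S ≠ ⊤ := windowMass_ne_top ℐ a u v
  rcases eq_or_ne S 0 with hS0 | hS0
  · simp [hS0]
  have hvu : 0 < v - u := sub_pos.2 huv
  set l := √(S.toReal / (2 * (v - u)))
  have hl : 0 < l := Real.sqrt_pos.2 (div_pos (ENNReal.toReal_pos hS0 hStop) (by positivity))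
  have hLm : 2 * (ENNReal.ofReal (l ^ 2) * ENNReal.ofReal (v - u)) = S := by
    rw [← ENNReal.ofReal_mul (by positivity), ← ENNReal.ofReal_ofNat 2,
      ← ENNReal.ofReal_mul zero_le_two, Real.sq_sqrt (by positivity)]
    conv_rhs => rw [← ENNReal.ofReal_toReal hStop]
    congr 1
    field_simp
  set m := ENNReal.ofReal (v - u)
  set A := sizeA ℐ a
  set E := {x | ENNReal.ofReal (l ^ 2) < windowDensity ℐ a u v x}
  have hmass : S ≤ 8 * A ^ 2 * volume E := windowMass_le_mul_volume hLm.le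
  have hweak : ENNReal.ofReal l * volume E ≤ m * sizeB ℐ a :=
    mul_volume_lt_windowDensity_le huv hl
  have hcube : S ^ 3 ≤ m ^ 3 * (128 * A ^ 4 * sizeB ℐ a ^ 2) :=
    calc S ^ 3 = S ^ 2 * (2 * (ENNReal.ofReal (l ^ 2) * m)) := by rw [hLm]; ring
      _ = 2 * m * (S * ENNReal.ofReal l) ^ 2 := by
          rw [mul_pow, ← ENNReal.ofReal_pow hl.le]
          ring
      _ ≤ 2 * m * (8 * A ^ 2 * volume E * ENNReal.ofReal l) ^ 2 := by gcongr
      _ = 2 * m * (8 * A ^ 2 * (ENNReal.ofReal l * volume E)) ^ 2 := by ring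
      _ ≤ 2 * m * (8 * A ^ 2 * (m * sizeB ℐ a)) ^ 2 := by gcongr
      _ = m ^ 3 * (128 * A ^ 4 * sizeB ℐ a ^ 2) := by ring
  have hm0 : m ≠ 0 := by simpa [m] using huv
  calc (m⁻¹ * S) ^ 3 = m⁻¹ ^ 3 * S ^ 3 := mul_pow _ _ _
    _ ≤ m⁻¹ ^ 3 * (m ^ 3 * (128 * A ^ 4 * sizeB ℐ a ^ 2)) := by gcongr
    _ = 128 * A ^ 4 * sizeB ℐ a ^ 2 := by
        rw [← mul_assoc, ← mul_pow, ENNReal.inv_mul_cancel hm0 ENNReal.ofReal_ne_top, one_pow,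
          one_mul]

end Converse

lemma sizeA_le_twelve_mul_sizeB (ℐ : Finset (ℤ × ℤ)) (a : ℤ × ℤ → ℂ) :
    sizeA ℐ a ≤ 12 * sizeB ℐ a := by
  set A := sizeA ℐ a
  set B := sizeB ℐ a
  rcases eq_or_ne A 0 with hA0 | hA0
  · simp [hA0]
  have hcube : A ^ 4 * A ^ 2 ≤ A ^ 4 * (128 * B ^ 2) :=
    calc A ^ 4 * A ^ 2 = (A ^ 2) ^ 3 := by ring
      _ ≤ 128 * A ^ 4 * B ^ 2 := by
          simp only [A, sizeA_sq, ENNReal.iSup_pow_of_ne_zero three_ne_zero]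
          exact iSup₂_le fun u v => iSup_le fun huv => inv_mul_windowMass_pow_three_le huv
      _ = A ^ 4 * (128 * B ^ 2) := by ring
  rw [ENNReal.mul_le_mul_iff_right (pow_ne_zero 4 hA0)
    (ENNReal.pow_ne_top (sizeA_ne_top ℐ a))] at hcube
  rw [← ENNReal.pow_le_pow_left_iff two_ne_zero]
  calc A ^ 2 ≤ 128 * B ^ 2 := hcube
    _ ≤ 144 * B ^ 2 := by gcongr; norm_num
    _ = (12 * B) ^ 2 := by ring

theorem size_equivalence :
    ∃ c C : ℝ, 0 < c ∧ 0 < C ∧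
      ∀ (ℐ : Finset (ℤ × ℤ)) (a : ℤ × ℤ → ℂ),
        ENNReal.ofReal c * sizeB ℐ a ≤ sizeA ℐ a ∧
        sizeA ℐ a ≤ ENNReal.ofReal C * sizeB ℐ a := by
  refine ⟨1, 12, one_pos, by norm_num, fun ℐ a => ⟨?_, ?_⟩⟩
  · simpa using sizeB_le_sizeA ℐ a
  · simpa using sizeA_le_twelve_mul_sizeB ℐ a
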